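/- Let m be a positive even integer. The quotient of (ℂ²∖{0}) × (ℂᵐ∖{0}) by the diagonal ℂ*-action a·(v, x) = (a⁻¹v, a x) is homeomorphic to ℙ¹(ℂ) × (ℂᵐ∖{0}). -/

import Mathlib

/-- The nonzero vectors of `ℂᵏ`, with the subspace topology. -/
abbrev NZ (k : ℕ) : Type := {v : Fin k → ℂ // v ≠ 0}

/-- The orbit relation of the diagonal `ℂ*`-action `a • (v, x) = (a⁻¹ v, a x)` on
`(ℂ² ∖ {0}) × (ℂᵐ ∖ {0})`. -/
def diagRel (m : ℕ) : (NZ 2 × NZ m) → (NZ 2 × NZ m) → Prop := fun p q =>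
  ∃ a : ℂˣ, (q.1 : Fin 2 → ℂ) = ((a⁻¹ : ℂˣ) : ℂ) • (p.1 : Fin 2 → ℂ) ∧
    (q.2 : Fin m → ℂ) = (a : ℂ) • (p.2 : Fin m → ℂ)

noncomputable instance (K V : Type*) [DivisionRing K] [AddCommGroup V] [Module K V]
    [TopologicalSpace V] : TopologicalSpace (Projectivization K V) :=
  inferInstanceAs (TopologicalSpace (Quotient (projectivizationSetoid K V)))

/-! Identify `ℂ²` with `ℍ` by `v ↦ v₀ + j v₁` and `ℂ^{2k}` with `ℍᵏ` by `x ↦ x_L + x_R j`.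
The action then reads `(v, x) ↦ (v a⁻¹, a x)`, which preserves the quaternion product `v x`, so
`(v, x) ↦ (v, v x)` is a homeomorphism of `(ℍ ∖ 0) × (ℍᵏ ∖ 0)` (undone by `v⁻¹ = v̄ / |v|²`)
carrying the orbits of the action onto the fibres of `[·] × id`. Since the projectivization map
is open, `[·] × id` is a quotient map. -/

section Projectivization

variable (K V : Type*) [DivisionRing K] [AddCommGroup V] [Module K V] [TopologicalSpace V]
  [ContinuousConstSMul K V]

theorem isOpenQuotientMap_projectivization_mk :
    IsOpenQuotientMap (Quotient.mk (projectivizationSetoid K V)) := by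
  refine ⟨Quot.mk_surjective, continuous_quot_mk, fun U hU => ?_⟩
  let smulNZ (u : Kˣ) (v : {v : V // v ≠ 0}) : {v : V // v ≠ 0} :=
    ⟨u • v.1, (smul_ne_zero_iff_ne u).2 v.2⟩
  have hsat : Quotient.mk (projectivizationSetoid K V) ⁻¹'
      (Quotient.mk (projectivizationSetoid K V) '' U) = ⋃ u : Kˣ, smulNZ u ⁻¹' U := by
    ext w
    simp only [Set.mem_preimage, Set.mem_image, Set.mem_iUnion]
    constructor
    · rintro ⟨y, hyU, hyw⟩
      obtain ⟨u, hu⟩ : (y : V) ∈ MulAction.orbit Kˣ (w : V) := Quotient.exact hyw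
      exact ⟨u, (Subtype.ext hu : smulNZ u w = y) ▸ hyU⟩
    · rintro ⟨u, hu⟩
      exact ⟨_, hu, Quotient.sound ⟨u, rfl⟩⟩
  exact isOpen_coinduced.2 (hsat ▸ isOpen_iUnion fun u => hU.preimage (by fun_prop))

end Projectivization

namespace Topology.IsQuotientMap

variable {X Y : Type*} [TopologicalSpace X] [TopologicalSpace Y]

noncomputable def quotHomeomorph {r : X → X → Prop} {f : X → Y} (hf : IsQuotientMap f)
    (hr : ∀ x y, r x y ↔ f x = f y) : Quot r ≃ₜ Y :=
  (Homeomorph.Quot.congrRight (r' := Setoid.ker f) hr).trans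
    (homeomorph (f := ⟨f, hf.continuous⟩) hf)

end Topology.IsQuotientMap

section Quaternion

open Complex ComplexConjugate

variable {k : ℕ}

/-- The quaternion product `(v₀ + j v₁) (x_L + x_R j)`, expanded with `j z = conj z j`, `j² = -1`,
where `x_L`, `x_R` are the two halves of `x`. -/
def quatMul (v : Fin 2 → ℂ) (x : Fin (k + k) → ℂ) : Fin (k + k) → ℂ :=
  Fin.append (fun i => v 0 * x (Fin.castAdd k i) - conj (v 1 * x (Fin.natAdd k i)))
    (fun i => v 0 * x (Fin.natAdd k i) + conj (v 1 * x (Fin.castAdd k i)))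

def quatConj (v : Fin 2 → ℂ) : Fin 2 → ℂ := ![conj (v 0), -v 1]

def quatNormSq (v : Fin 2 → ℂ) : ℝ := normSq (v 0) + normSq (v 1)

noncomputable def quatInv (v : Fin 2 → ℂ) : Fin 2 → ℂ := (quatNormSq v)⁻¹ • quatConj v

@[simp]
theorem quatMul_castAdd (v : Fin 2 → ℂ) (x : Fin (k + k) → ℂ) (i : Fin k) :
    quatMul v x (Fin.castAdd k i) =
      v 0 * x (Fin.castAdd k i) - conj (v 1 * x (Fin.natAdd k i)) :=
  Fin.append_left _ _ i

@[simp]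
theorem quatMul_addNat (v : Fin 2 → ℂ) (x : Fin (k + k) → ℂ) (i : Fin k) :
    quatMul v x (i.addNat k) = v 0 * x (i.addNat k) + conj (v 1 * x (Fin.castAdd k i)) := by
  rw [← Fin.natAdd_eq_addNat]
  exact Fin.append_right _ _ i

theorem quatMul_smul_comm (c : ℂ) (v : Fin 2 → ℂ) (x : Fin (k + k) → ℂ) :
    quatMul (c • v) x = quatMul v (c • x) := by
  ext i
  induction i using Fin.addCases <;>
    simp only [Fin.natAdd_eq_addNat, quatMul_castAdd, quatMul_addNat, Pi.smul_apply,
      smul_eq_mul, map_mul] <;>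
    ring

theorem quatMul_real_smul_left (r : ℝ) (v : Fin 2 → ℂ) (x : Fin (k + k) → ℂ) :
    quatMul (r • v) x = r • quatMul v x := by
  ext i
  induction i using Fin.addCases <;>
    simp only [Fin.natAdd_eq_addNat, quatMul_castAdd, quatMul_addNat, Pi.smul_apply,
      real_smul, map_mul, conj_ofReal] <;>
    ring

theorem quatMul_real_smul_right (r : ℝ) (v : Fin 2 → ℂ) (x : Fin (k + k) → ℂ) :
    quatMul v (r • x) = r • quatMul v x := by
  ext i
  induction i using Fin.addCases <;>
    simp only [Fin.natAdd_eq_addNat, quatMul_castAdd, quatMul_addNat, Pi.smul_apply,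
      real_smul, map_mul, conj_ofReal] <;>
    ring

@[simp]
theorem quatMul_zero (v : Fin 2 → ℂ) : quatMul v (0 : Fin (k + k) → ℂ) = 0 := by
  ext i
  induction i using Fin.addCases <;> simp

theorem quatMul_quatConj_quatMul (v : Fin 2 → ℂ) (x : Fin (k + k) → ℂ) :
    quatMul (quatConj v) (quatMul v x) = quatNormSq v • x := by
  ext i
  induction i using Fin.addCases <;>
    simp only [Fin.natAdd_eq_addNat, quatMul_castAdd, quatMul_addNat, quatConj, quatNormSq,
      Matrix.cons_val_zero, Matrix.cons_val_one, Matrix.cons_val_fin_one, Pi.smul_apply,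
      real_smul, map_mul, map_add, map_sub, map_neg, conj_conj, ofReal_add,
      normSq_eq_conj_mul_self] <;>
    ring

theorem quatMul_quatMul_quatConj (v : Fin 2 → ℂ) (x : Fin (k + k) → ℂ) :
    quatMul v (quatMul (quatConj v) x) = quatNormSq v • x := by
  ext i
  induction i using Fin.addCases <;>
    simp only [Fin.natAdd_eq_addNat, quatMul_castAdd, quatMul_addNat, quatConj, quatNormSq,
      Matrix.cons_val_zero, Matrix.cons_val_one, Matrix.cons_val_fin_one, Pi.smul_apply,
      real_smul, map_mul, map_add, map_sub, map_neg, conj_conj, ofReal_add,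
      normSq_eq_conj_mul_self] <;>
    ring

theorem quatNormSq_ne_zero {v : Fin 2 → ℂ} (hv : v ≠ 0) : quatNormSq v ≠ 0 := by
  contrapose! hv
  rw [quatNormSq, add_eq_zero_iff_of_nonneg (normSq_nonneg _) (normSq_nonneg _),
    normSq_eq_zero, normSq_eq_zero] at hv
  ext i
  fin_cases i <;> simp [hv.1, hv.2]

theorem quatMul_quatInv_quatMul {v : Fin 2 → ℂ} (hv : v ≠ 0) (x : Fin (k + k) → ℂ) :
    quatMul (quatInv v) (quatMul v x) = x := by
  rw [quatInv, quatMul_real_smul_left, quatMul_quatConj_quatMul,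
    inv_smul_smul₀ (quatNormSq_ne_zero hv)]

theorem quatMul_quatMul_quatInv {v : Fin 2 → ℂ} (hv : v ≠ 0) (x : Fin (k + k) → ℂ) :
    quatMul v (quatMul (quatInv v) x) = x := by
  rw [quatInv, quatMul_real_smul_left, quatMul_real_smul_right, quatMul_quatMul_quatConj,
    inv_smul_smul₀ (quatNormSq_ne_zero hv)]

theorem quatMul_injective {v : Fin 2 → ℂ} (hv : v ≠ 0) :
    Function.Injective (quatMul (k := k) v) :=
  Function.LeftInverse.injective (quatMul_quatInv_quatMul hv)

theorem quatMul_ne_zero {v : Fin 2 → ℂ} (hv : v ≠ 0) {x : Fin (k + k) → ℂ} (hx : x ≠ 0) :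
    quatMul v x ≠ 0 := by
  simpa using (quatMul_injective hv).ne hx

theorem continuous_quatMul :
    Continuous fun p : (Fin 2 → ℂ) × (Fin (k + k) → ℂ) => quatMul p.1 p.2 := by
  refine continuous_pi fun i => ?_
  induction i using Fin.addCases <;>
    simp only [Fin.natAdd_eq_addNat, quatMul_castAdd, quatMul_addNat] <;> fun_prop

theorem continuousOn_quatInv : ContinuousOn quatInv {v : Fin 2 → ℂ | v ≠ 0} := by
  have hnorm : Continuous quatNormSq := by unfold quatNormSq; fun_prop
  have hconj : Continuous quatConj := by unfold quatConj; fun_prop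
  exact (hnorm.continuousOn.inv₀ fun v hv => quatNormSq_ne_zero hv).smul hconj.continuousOn

end Quaternion

noncomputable def quatMulHomeomorph (k : ℕ) : NZ 2 × NZ (k + k) ≃ₜ NZ 2 × NZ (k + k) where
  toFun p := (p.1, ⟨quatMul p.1 p.2, quatMul_ne_zero p.1.2 p.2.2⟩)
  invFun p := (p.1, ⟨quatMul (quatInv p.1) p.2,
    fun h => p.2.2 (by rw [← quatMul_quatMul_quatInv p.1.2 p.2.1, h, quatMul_zero])⟩)
  left_inv p := Prod.ext rfl (Subtype.ext (quatMul_quatInv_quatMul p.1.2 p.2.1))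
  right_inv p := Prod.ext rfl (Subtype.ext (quatMul_quatMul_quatInv p.1.2 p.2.1))
  continuous_toFun := continuous_fst.prodMk <| (continuous_quatMul.comp
    (continuous_subtype_val.prodMap continuous_subtype_val)).subtype_mk _
  continuous_invFun := by
    have hinv : Continuous fun v : NZ 2 => quatInv v.1 :=
      continuousOn_iff_continuous_domRestrict.1 continuousOn_quatInv
    exact continuous_fst.prodMk <| (continuous_quatMul.comp
      ((hinv.comp continuous_fst).prodMk (continuous_subtype_val.comp continuous_snd))).subtype_mk _

noncomputable def diagQuotientMap (k : ℕ) :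
    NZ 2 × NZ (k + k) → Projectivization ℂ (Fin 2 → ℂ) × NZ (k + k) :=
  Prod.map (Quotient.mk _) id ∘ quatMulHomeomorph k

theorem isQuotientMap_diagQuotientMap (k : ℕ) : Topology.IsQuotientMap (diagQuotientMap k) :=
  ((isOpenQuotientMap_projectivization_mk ℂ _).prodMap .id).isQuotientMap.comp
    (quatMulHomeomorph k).isQuotientMap

theorem diagQuotientMap_eq_iff {k : ℕ} (p q : NZ 2 × NZ (k + k)) :
    diagQuotientMap k p = diagQuotientMap k q ↔ diagRel (k + k) p q := by
  obtain ⟨⟨v, hv⟩, ⟨x, hx⟩⟩ := p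
  obtain ⟨⟨w, hw⟩, ⟨y, hy⟩⟩ := q
  change (Projectivization.mk ℂ v hv, (⟨quatMul v x, _⟩ : NZ (k + k))) =
      (Projectivization.mk ℂ w hw, ⟨quatMul w y, _⟩) ↔
    ∃ a : ℂˣ, w = ((a⁻¹ : ℂˣ) : ℂ) • v ∧ y = (a : ℂ) • x
  rw [Prod.mk.injEq, Projectivization.mk_eq_mk_iff, Subtype.mk.injEq]
  constructor
  · rintro ⟨⟨a, rfl⟩, hmul⟩
    refine ⟨a, by simp [Units.smul_def, smul_smul], quatMul_injective hw ?_⟩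
    rw [← hmul, Units.smul_def, quatMul_smul_comm]
  · rintro ⟨a, rfl, rfl⟩
    refine ⟨⟨a, by simp [Units.smul_def, smul_smul]⟩, ?_⟩
    rw [quatMul_smul_comm, smul_smul]
    simp

theorem quotient_homeomorph_proj_line_prod (m : ℕ) (hme : Even m) :
    Nonempty (Quot (diagRel m) ≃ₜ Projectivization ℂ (Fin 2 → ℂ) × NZ m) := by
  obtain ⟨k, rfl⟩ := hme
  exact ⟨(isQuotientMap_diagQuotientMap k).quotHomeomorph
    fun p q => (diagQuotientMap_eq_iff p q).symm⟩
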